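/- Let G = (V, E, W) be a finite directed weighted graph in which every directed cycle has strictly positive weight, and let p(v) = max(0, max_u (−d(u,v))) where d is shortest-path distance. If p(b_ℓ) > 0 and b₀ is a vertex attaining p(b_ℓ) = −d(b₀, b_ℓ), then for every vertex b_i on a shortest path from b₀ to b_ℓ, p(b_i) = −d(b₀, b_i); in particular p(b₀) = 0. -/

import Mathlib

/-- Shortest-path distance from `u` to `v` in the directed graph with edge relation `E` and
edge weights `W`: the infimum (in `EReal`) of the total weights of all walks from `u` to `v`
(`+∞` if `v` is unreachable from `u`). -/
noncomputable def gdist {V : Type*} (E : V → V → Prop) (W : V → V → ℝ) (u v : V) : EReal :=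
  ⨅ (ℓ : ℕ) (c : Fin (ℓ + 1) → V) (_ : c 0 = u) (_ : c (Fin.last ℓ) = v)
      (_ : ∀ j : Fin ℓ, E (c j.castSucc) (c j.succ)),
    (((∑ j : Fin ℓ, W (c j.castSucc) (c j.succ)) : ℝ) : EReal)

/-- The prices computed by the Find-Prices algorithm:
`p v = max (0, max over sources u of (- d(u, v)))`. -/
noncomputable def findPrice {V : Type*} [Fintype V] (E : V → V → Prop) (W : V → V → ℝ)
    (v : V) : ℝ :=
  (⨆ u : V, max 0 (-(gdist E W u v))).toReal

/-- A directed cycle (with wraparound via `Fin` addition). -/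
def IsCycle {V : Type*} (E : V → V → Prop) {ℓ : ℕ} (c : Fin (ℓ + 1) → V) : Prop :=
  ∀ j : Fin (ℓ + 1), E (c j) (c (j + 1))

/-- The total weight of a directed cycle. -/
def cycleWeight {V : Type*} (W : V → V → ℝ) {ℓ : ℕ} (c : Fin (ℓ + 1) → V) : ℝ :=
  ∑ j : Fin (ℓ + 1), W (c j) (c (j + 1))

/-!
If `b₀` minimises `d(·, b_ℓ)`, with value `T` the weight of the path, then for any `u` and any
walk from `u` to `b_i`, appending the rest of the path gives a walk from `u` to `b_ℓ`; so that walk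
weighs at least `T` minus the weight of the suffix, i.e. the weight of the prefix up to `b_i`.
The prefix therefore realises both `d(b₀, b_i)` and `min_u d(u, b_i)`, which is `≤ d(b_i, b_i) ≤ 0`,
hence `p(b_i) = -d(b₀, b_i)`.
-/

open Finset

section Walks

variable {V : Type*} {E : V → V → Prop} {W : V → V → ℝ} {f g : ℕ → V} {m n : ℕ}

/-- Walks are encoded as `ℕ → V`, of which only `f 0, …, f m` matter: unlike the `Fin`-indexed
walks of `gdist`, these split and concatenate without casts. -/
def IsWalk (E : V → V → Prop) (f : ℕ → V) (m : ℕ) : Prop :=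
  ∀ k < m, E (f k) (f (k + 1))

def walkWeight (W : V → V → ℝ) (f : ℕ → V) (m : ℕ) : ℝ :=
  ∑ k ∈ range m, W (f k) (f (k + 1))

lemma isWalk_congr (h : ∀ k ≤ m, f k = g k) : IsWalk E f m ↔ IsWalk E g m :=
  forall₂_congr fun k hk => by rw [h k hk.le, h (k + 1) hk]

lemma walkWeight_congr (h : ∀ k ≤ m, f k = g k) : walkWeight W f m = walkWeight W g m :=
  sum_congr rfl fun k hk => by
    rw [mem_range] at hk
    rw [h k hk.le, h (k + 1) hk]

lemma isWalk_add_iff :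
    IsWalk E f (m + n) ↔ IsWalk E f m ∧ IsWalk E (fun k => f (m + k)) n := by
  refine ⟨fun h => ⟨fun k hk => h k (by omega), fun k hk => h (m + k) (by omega)⟩,
    fun ⟨hm, hn⟩ k hk => ?_⟩
  rcases lt_or_ge k m with hkm | hkm
  · exact hm k hkm
  · obtain ⟨j, rfl⟩ := Nat.exists_eq_add_of_le hkm
    exact hn j (by omega)

lemma walkWeight_add :
    walkWeight W f (m + n) = walkWeight W f m + walkWeight W (fun k => f (m + k)) n :=
  sum_range_add _ m n

lemma IsWalk.mono (hf : IsWalk E f n) (hmn : m ≤ n) : IsWalk E f m :=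
  fun k hk => hf k (by omega)

def natWalk (c : Fin (m + 1) → V) : ℕ → V :=
  fun k => c (Fin.clamp k m)

lemma natWalk_coe (c : Fin (m + 1) → V) (i : Fin (m + 1)) : natWalk c i = c i :=
  congrArg c (Fin.ext (min_eq_left i.is_le))

lemma isWalk_natWalk {c : Fin (m + 1) → V} (hc : ∀ j : Fin m, E (c j.castSucc) (c j.succ)) :
    IsWalk E (natWalk c) m := fun k hk => by
  simpa [← natWalk_coe] using hc ⟨k, hk⟩

lemma walkWeight_natWalk (c : Fin (m + 1) → V) :
    walkWeight W (natWalk c) m = ∑ j : Fin m, W (c j.castSucc) (c j.succ) := by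
  rw [walkWeight, ← Fin.sum_univ_eq_sum_range (fun k => W (natWalk c k) (natWalk c (k + 1)))]
  refine sum_congr rfl fun j _ => ?_
  rw [← natWalk_coe c j.castSucc, ← natWalk_coe c j.succ]
  rfl

end Walks

section Distance

variable {V : Type*} {E : V → V → Prop} {W : V → V → ℝ} {f g : ℕ → V} {m n : ℕ}

lemma gdist_le_walkWeight (hf : IsWalk E f m) :
    gdist E W (f 0) (f m) ≤ walkWeight W f m := by
  have hsum : ∑ j : Fin m, W (f j.castSucc) (f j.succ) = walkWeight W f m :=
    Fin.sum_univ_eq_sum_range (fun k => W (f k) (f (k + 1))) m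
  rw [← hsum]
  exact iInf_le_of_le m <| iInf_le_of_le (fun j => f j) <| iInf_le_of_le rfl <|
    iInf_le_of_le rfl <| iInf_le _ fun j : Fin m => hf j j.isLt

lemma le_gdist {u v : V} {x : EReal}
    (h : ∀ (m : ℕ) (f : ℕ → V), f 0 = u → f m = v → IsWalk E f m → x ≤ walkWeight W f m) :
    x ≤ gdist E W u v := by
  refine le_iInf fun m => le_iInf fun c => le_iInf fun hc0 => le_iInf fun hcm =>
    le_iInf fun hc => ?_
  rw [← walkWeight_natWalk]
  exact h m (natWalk c) (by rw [← hc0]; exact natWalk_coe c 0)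
    (by rw [← hcm]; exact natWalk_coe c (Fin.last m)) (isWalk_natWalk hc)

lemma gdist_self_nonpos (v : V) : gdist E W v v ≤ 0 := by
  simpa [walkWeight] using gdist_le_walkWeight (E := E) (W := W) (f := fun _ => v) (m := 0)
    fun k hk => absurd hk k.not_lt_zero

lemma gdist_le_walkWeight_add (hf : IsWalk E f m) (hg : IsWalk E g n) (hfg : f m = g 0) :
    gdist E W (f 0) (g n) ≤ ↑(walkWeight W f m + walkWeight W g n) := by
  set h : ℕ → V := fun k => if k ≤ m then f k else g (k - m) with hh
  have hleft : ∀ k ≤ m, h k = f k := fun k hk => if_pos hk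
  have hright : ∀ k, h (m + k) = g k := by
    intro k
    rcases k.eq_zero_or_pos with rfl | hk
    · simpa [hh] using hfg
    · simp [hh, show ¬ m + k ≤ m by omega]
  have hwalk : IsWalk E h (m + n) := by
    rw [isWalk_add_iff, isWalk_congr hleft, funext hright]
    exact ⟨hf, hg⟩
  have := gdist_le_walkWeight (W := W) hwalk
  rwa [walkWeight_add, walkWeight_congr hleft, funext hright, hleft 0 m.zero_le, hright] at this

end Distance

section Prices

variable {V : Type*} {E : V → V → Prop} {W : V → V → ℝ} {f : ℕ → V} {ℓ : ℕ}

lemma walkWeight_le_gdist_prefix (hf : IsWalk E f ℓ)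
    (hmin : ∀ u, (walkWeight W f ℓ : EReal) ≤ gdist E W u (f ℓ)) (i : ℕ) (hi : i ≤ ℓ) (u : V) :
    (walkWeight W f i : EReal) ≤ gdist E W u (f i) := by
  obtain ⟨n, rfl⟩ := Nat.exists_eq_add_of_le hi
  rw [isWalk_add_iff] at hf
  refine le_gdist fun m g hg0 hgm hg => ?_
  have hconcat : gdist E W u (f (i + n)) ≤
      ↑(walkWeight W g m + walkWeight W (fun k => f (i + k)) n) :=
    hg0 ▸ gdist_le_walkWeight_add hg hf.2 (by rw [hgm, add_zero])
  have hle := (hmin u).trans hconcat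
  rw [walkWeight_add, EReal.coe_le_coe_iff] at hle
  exact EReal.coe_le_coe_iff.mpr (by linarith)

lemma neg_gdist_le_findPrice [Fintype V] {v : V} (hv : 0 < findPrice E W v) (u : V) :
    -gdist E W u v ≤ findPrice E W v := by
  -- a positive price rules out the junk values `toReal ⊤ = toReal ⊥ = 0`
  have hcoe : (findPrice E W v : EReal) = ⨆ u, max 0 (-gdist E W u v) := by
    apply EReal.coe_toReal <;> intro h <;> simp [findPrice, h] at hv
  rw [hcoe]
  exact (le_max_right _ _).trans (le_iSup (fun u => max 0 (-gdist E W u v)) u)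

lemma findPrice_eq_neg [Fintype V] {v u₀ : V} {x : ℝ} (hx : x ≤ 0)
    (hle : ∀ u, (x : EReal) ≤ gdist E W u v) (hu₀ : gdist E W u₀ v = x) :
    findPrice E W v = -x := by
  have hsup : ⨆ u, max 0 (-gdist E W u v) = ((-x : ℝ) : EReal) := by
    refine le_antisymm (iSup_le fun u => max_le ?_ ?_) ?_
    · exact_mod_cast neg_nonneg.mpr hx
    · rw [EReal.coe_neg]
      exact EReal.neg_le_neg_iff.mpr (hle u)
    · rw [EReal.coe_neg, ← hu₀]
      exact (le_max_right _ _).trans (le_iSup (fun u => max 0 (-gdist E W u v)) u₀)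
  rw [findPrice, hsup, EReal.toReal_coe]

end Prices

theorem stmt_3_general {V : Type*} [Fintype V] (E : V → V → Prop) (W : V → V → ℝ)
    (b₀ bl : V)
    (hppos : 0 < findPrice E W bl)
    (hatt : (findPrice E W bl : EReal) = -(gdist E W b₀ bl))
    (ℓ : ℕ) (c : Fin (ℓ + 1) → V)
    (hc0 : c 0 = b₀) (hcl : c (Fin.last ℓ) = bl)
    (hcE : ∀ j : Fin ℓ, E (c j.castSucc) (c j.succ))
    (hshort : (((∑ j : Fin ℓ, W (c j.castSucc) (c j.succ)) : ℝ) : EReal) = gdist E W b₀ bl) :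
    (∀ i : Fin (ℓ + 1), (findPrice E W (c i) : EReal) = -(gdist E W b₀ (c i))) ∧
      findPrice E W b₀ = 0 := by
  set f := natWalk c
  have hf : IsWalk E f ℓ := isWalk_natWalk hcE
  have hf0 : f 0 = b₀ := (natWalk_coe c 0).trans hc0
  have hfℓ : f ℓ = bl := (natWalk_coe c (Fin.last ℓ)).trans hcl
  have hmin : ∀ u, (walkWeight W f ℓ : EReal) ≤ gdist E W u (f ℓ) := fun u => by
    have := neg_gdist_le_findPrice hppos u
    rwa [hatt, ← hshort, ← walkWeight_natWalk, EReal.neg_le_neg_iff, ← hfℓ] at this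
  have hprefix := walkWeight_le_gdist_prefix hf hmin
  have hdist : ∀ i ≤ ℓ, gdist E W b₀ (f i) = walkWeight W f i := fun i hi =>
    le_antisymm (hf0 ▸ gdist_le_walkWeight (hf.mono hi)) (hprefix i hi b₀)
  have hprice : ∀ i ≤ ℓ, findPrice E W (f i) = -walkWeight W f i := fun i hi =>
    findPrice_eq_neg (by exact_mod_cast (hprefix i hi (f i)).trans (gdist_self_nonpos _))
      (hprefix i hi) (hdist i hi)
  refine ⟨fun i => ?_, ?_⟩
  · rw [← natWalk_coe c i, hprice i i.is_le, hdist i i.is_le, EReal.coe_neg]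
  · simpa [walkWeight, hf0] using hprice 0 ℓ.zero_le

/-- Setting of the Find-Prices algorithm: all directed cycles strictly positive,
`p(v) = max (0, max_u (−d(u,v)))`.  If `p(b_ℓ) > 0` and `b₀` attains `p(b_ℓ) = −d(b₀, b_ℓ)`,
then for every vertex `b_i` on a shortest path from `b₀` to `b_ℓ` we have
`p(b_i) = −d(b₀, b_i)`; in particular `p(b₀) = 0`. -/
theorem stmt_3 {V : Type*} [Fintype V] [Nonempty V] (E : V → V → Prop) (W : V → V → ℝ)
    (hpos : ∀ (ℓ : ℕ) (c : Fin (ℓ + 1) → V), IsCycle E c → 0 < cycleWeight W c)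
    (b₀ bl : V)
    (hppos : 0 < findPrice E W bl)
    (hatt : (findPrice E W bl : EReal) = -(gdist E W b₀ bl))
    (ℓ : ℕ) (c : Fin (ℓ + 1) → V)
    (hc0 : c 0 = b₀) (hcl : c (Fin.last ℓ) = bl)
    (hcE : ∀ j : Fin ℓ, E (c j.castSucc) (c j.succ))
    (hshort : (((∑ j : Fin ℓ, W (c j.castSucc) (c j.succ)) : ℝ) : EReal) = gdist E W b₀ bl) :
    (∀ i : Fin (ℓ + 1), (findPrice E W (c i) : EReal) = -(gdist E W b₀ (c i))) ∧
      findPrice E W b₀ = 0 :=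
  stmt_3_general E W b₀ bl hppos hatt ℓ c hc0 hcl hcE hshort
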